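/- (Multidimensional bound for the parameter-estimation indicator.) Let P(·|γ) be a family of probability distributions on 𝒳 indexed by γ in an open subset of ℝ^d, differentiable in each coordinate γ_i, and let γ̂: 𝒳 → ℝ^d be an estimator. Define γ̂_i(γ) = Σ_{x∈𝒳} P(x|γ) γ̂_i(x) and σ_i(γ) = √(Σ_{x∈𝒳} P(x|γ) γ̂_i(x)² − γ̂_i(γ)²), and assume σ_i(γ) > 0 for every i. Then the indicator I₃(γ) = √(Σ_{i=1}^d ((∂γ̂_i(γ)/∂γ_i) / σ_i(γ))²) satisfies I₃(γ) ≤ √(tr F(γ)). -/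

import Mathlib

/-!
Fix a coordinate `i` and write `p = P γ`, `ṗ = ∂ᵢP γ`. Since `∑ₓ P(γ') x = 1` near `γ`, the score
has mean zero, `∑ ṗ = 0`, so `∂ᵢ γ̂ᵢ = ∑ ṗ (γ̂ᵢ - m)` with `m` the mean of `γ̂ᵢ`. Cauchy–Schwarz on
`ṗ (γ̂ᵢ - m) = (ṗ / √p) · (√p (γ̂ᵢ - m))` gives the one-parameter Cramér–Rao bound
`(∂ᵢ γ̂ᵢ)² ≤ Fᵢᵢ σᵢ²`; summing over `i` gives the claim.
-/

open Finset Real Filter Topology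

section CramerRao

variable {X : Type*} [Fintype X] {p : X → ℝ}

theorem sum_mul_sub_mean_sq (hp1 : ∑ x, p x = 1) (g : X → ℝ) :
    ∑ x, p x * (g x - ∑ y, p y * g y) ^ 2 = ∑ x, p x * g x ^ 2 - (∑ x, p x * g x) ^ 2 := by
  set m := ∑ y, p y * g y
  calc ∑ x, p x * (g x - m) ^ 2 = ∑ x, (p x * g x ^ 2 - 2 * m * (p x * g x) + m ^ 2 * p x) :=
        sum_congr rfl fun x _ => by ring
    _ = ∑ x, p x * g x ^ 2 - m ^ 2 := by
        rw [sum_add_distrib, sum_sub_distrib, ← mul_sum, ← mul_sum, hp1]; ring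

theorem sq_sum_mul_le_fisher_mul_variance (hp : ∀ x, 0 < p x) (hp1 : ∑ x, p x = 1)
    {q : X → ℝ} (hq : ∑ x, q x = 0) (g : X → ℝ) :
    (∑ x, q x * g x) ^ 2
      ≤ (∑ x, q x ^ 2 / p x) * (∑ x, p x * g x ^ 2 - (∑ x, p x * g x) ^ 2) := by
  have hcentered : ∑ x, q x * g x = ∑ x, q x * (g x - ∑ y, p y * g y) := by
    simp only [mul_sub, sum_sub_distrib, ← sum_mul, hq, zero_mul, sub_zero]
  rw [hcentered, ← sum_mul_sub_mean_sq hp1]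
  refine sum_sq_le_sum_mul_sum_of_sq_le_mul _ (fun x _ => by have := hp x; positivity)
    (fun x _ => by have := hp x; positivity) fun x _ => le_of_eq ?_
  field_simp [(hp x).ne']

theorem sq_div_sqrt_variance_le_fisher (hp : ∀ x, 0 < p x) (hp1 : ∑ x, p x = 1)
    {q : X → ℝ} (hq : ∑ x, q x = 0) (g : X → ℝ) :
    ((∑ x, q x * g x) / √(∑ x, p x * g x ^ 2 - (∑ x, p x * g x) ^ 2)) ^ 2
      ≤ ∑ x, q x ^ 2 / p x := by
  have hvar : 0 ≤ ∑ x, p x * g x ^ 2 - (∑ x, p x * g x) ^ 2 := by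
    rw [← sum_mul_sub_mean_sq hp1]
    exact sum_nonneg fun x _ => mul_nonneg (hp x).le (sq_nonneg _)
  rw [div_pow, sq_sqrt hvar]
  exact div_le_of_le_mul₀ hvar (sum_nonneg fun x _ => div_nonneg (sq_nonneg _) (hp x).le)
    (sq_sum_mul_le_fisher_mul_variance hp hp1 hq g)

end CramerRao

theorem sum_deriv_eq_zero_of_eventually_sum_eq {X : Type*} [Fintype X] {f : ℝ → X → ℝ} {t c : ℝ}
    (hf : ∀ x, DifferentiableAt ℝ (f · x) t) (hc : (fun s => ∑ x, f s x) =ᶠ[𝓝 t] fun _ => c) :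
    ∑ x, deriv (f · x) t = 0 := by
  have hsum : HasDerivAt (fun s => ∑ x, f s x) (∑ x, deriv (f · x) t) t :=
    HasDerivAt.fun_sum fun x _ => (hf x).hasDerivAt
  rw [← hsum.deriv, hc.deriv_eq, deriv_const]

theorem IsOpen.eventually_update_mem {d : ℕ} {U : Set (Fin d → ℝ)} (hU : IsOpen U)
    {γ : Fin d → ℝ} (hγ : γ ∈ U) (i : Fin d) : ∀ᶠ s in 𝓝 (γ i), Function.update γ i s ∈ U := by
  have hcont : Continuous fun s : ℝ => Function.update γ i s :=
    continuous_const.update i continuous_id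
  refine hcont.continuousAt.preimage_mem_nhds ?_
  simpa using hU.mem_nhds hγ

theorem stmt13_general {X : Type*} [Fintype X] {d : ℕ}
    (U : Set (Fin d → ℝ)) (hU : IsOpen U)
    (P : (Fin d → ℝ) → X → ℝ)
    (hpos : ∀ γ ∈ U, ∀ x : X, 0 < P γ x)
    (hsum : ∀ γ ∈ U, ∑ x : X, P γ x = 1)
    (hdiff : ∀ x : X, ∀ i : Fin d, ∀ γ ∈ U,
      DifferentiableAt ℝ (fun t : ℝ => P (Function.update γ i t) x) (γ i))
    (ghat : X → Fin d → ℝ)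
    (γ : Fin d → ℝ) (hγ : γ ∈ U) :
    Real.sqrt (∑ i : Fin d,
        (deriv (fun s : ℝ => ∑ x : X, P (Function.update γ i s) x * ghat x i) (γ i) /
          Real.sqrt ((∑ x : X, P γ x * (ghat x i) ^ 2) - (∑ x : X, P γ x * ghat x i) ^ 2)) ^ 2)
      ≤ Real.sqrt (∑ i : Fin d, ∑ x : X,
          (deriv (fun s : ℝ => P (Function.update γ i s) x) (γ i)) ^ 2 / P γ x) := by
  refine sqrt_le_sqrt (sum_le_sum fun i _ => ?_)
  have hderiv_mean : deriv (fun s => ∑ x, P (Function.update γ i s) x * ghat x i) (γ i)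
      = ∑ x, deriv (fun s => P (Function.update γ i s) x) (γ i) * ghat x i :=
    (HasDerivAt.fun_sum fun x _ => (hdiff x i γ hγ).hasDerivAt.mul_const _).deriv
  have hscore : ∑ x, deriv (fun s => P (Function.update γ i s) x) (γ i) = 0 :=
    sum_deriv_eq_zero_of_eventually_sum_eq (fun x => hdiff x i γ hγ)
      ((hU.eventually_update_mem hγ i).mono fun s hs => hsum _ hs)
  rw [hderiv_mean]
  exact sq_div_sqrt_variance_le_fisher (hpos γ hγ) (hsum γ hγ) hscore _

/-- multidimensional bound for the parameter-estimation indicator. -/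
theorem stmt13 {X : Type*} [Fintype X] [Nonempty X] {d : ℕ}
    (U : Set (Fin d → ℝ)) (hU : IsOpen U)
    (P : (Fin d → ℝ) → X → ℝ)
    (hpos : ∀ γ ∈ U, ∀ x : X, 0 < P γ x)
    (hsum : ∀ γ ∈ U, ∑ x : X, P γ x = 1)
    (hdiff : ∀ x : X, ∀ i : Fin d, ∀ γ ∈ U,
      DifferentiableAt ℝ (fun t : ℝ => P (Function.update γ i t) x) (γ i))
    (ghat : X → Fin d → ℝ)
    (γ : Fin d → ℝ) (hγ : γ ∈ U)
    (hσ : ∀ i : Fin d,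
      0 < Real.sqrt ((∑ x : X, P γ x * (ghat x i) ^ 2) - (∑ x : X, P γ x * ghat x i) ^ 2)) :
    Real.sqrt (∑ i : Fin d,
        (deriv (fun s : ℝ => ∑ x : X, P (Function.update γ i s) x * ghat x i) (γ i) /
          Real.sqrt ((∑ x : X, P γ x * (ghat x i) ^ 2) - (∑ x : X, P γ x * ghat x i) ^ 2)) ^ 2)
      ≤ Real.sqrt (∑ i : Fin d, ∑ x : X,
          (deriv (fun s : ℝ => P (Function.update γ i s) x) (γ i)) ^ 2 / P γ x) :=
  stmt13_general U hU P hpos hsum hdiff ghat γ hγ
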